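/- arXiv:2311.13699 — 8 statements merged into one kernel-verified Lean document; each statement's English description precedes it below -/
import Mathlib

section
/- Let M be a Polish space equipped with a linear order ≤ whose graph {(x, y) : M × M | x ≤ y} is a Borel subset of M × M. Then for every uncountable Borel set X ⊆ M there exists a map f from Cantor space (ℕ → Bool) into M whose range is contained in X and which is strictly increasing with respect to the lexicographic order: whenever r ≠ s and, at the least coordinate n where r and s differ, r(n) < s(n), one has f(r) < f(s). In particular f is injective. -/
/-!
Push Lebesgue measure on `[0, 1]` through a Borel isomorphism `ℝ ≃ X` to get a finite atomless
measure `μ` with `μ X > 0`. For such a measure some `z` has `μ (Iio z) > 0` and `μ (Ioi z) > 0`: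
otherwise every point lies in `{x | μ (Iic x) = 0}` or in `{x | μ (Ici x) = 0}`, and both sets are
null by Fubini, since the square of either is covered by a null set and its transpose. By inner
regularity, every compact set of positive measure thus contains two compact sets of positive
measure, one entirely below the other; the branches of the binary tree obtained by iterating this
split give the increasing embedding of Cantor space.
-/

open Topology MeasureTheory Set PiNat

theorem exists_strictMono_lex_of_forall_exists_lt_subsets {α : Type*} [TopologicalSpace α]
    [T2Space α] [Preorder α] {P : Set α → Prop}
    (hP : ∀ K, P K → IsCompact K ∧ K.Nonempty)
    (hsplit : ∀ K, P K → ∃ K₀ K₁, P K₀ ∧ P K₁ ∧ K₀ ⊆ K ∧ K₁ ⊆ K ∧ ∀ x ∈ K₀, ∀ y ∈ K₁, x < y)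
    {K : Set α} (hK : P K) :
    ∃ f : Lex (ℕ → Bool) → α, StrictMono f ∧ range f ⊆ K := by
  choose! K₀ K₁ hK₀ hK₁ hK₀K hK₁K hlt using hsplit
  -- `res x n` lists the first `n` digits of `x` in reverse; `A (res x n)` is the node they reach.
  let A : List Bool → Set α := List.foldr (fun b L => cond b (K₁ L) (K₀ L)) K
  have hA : ∀ l, P (A l) := by
    intro l
    induction l with
    | nil => exact hK
    | cons b l ih => cases b with
      | false => exact hK₀ _ ih
      | true => exact hK₁ _ ih
  have hA_res_succ : ∀ (x : ℕ → Bool) n,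
      A (res x (n + 1)) = cond (x n) (K₁ (A (res x n))) (K₀ (A (res x n))) := fun _ _ => rfl
  have hA_succ : ∀ (x : ℕ → Bool) n, A (res x (n + 1)) ⊆ A (res x n) := by
    intro x n
    rw [hA_res_succ]
    cases x n
    exacts [hK₀K _ (hA _), hK₁K _ (hA _)]
  have hbranch : ∀ x : ℕ → Bool, (⋂ n, A (res x n)).Nonempty := fun x =>
    IsCompact.nonempty_iInter_of_sequence_nonempty_isCompact_isClosed _ (hA_succ x)
      (fun _ => (hP _ (hA _)).2) (hP _ (hA _)).1 (fun _ => (hP _ (hA _)).1.isClosed)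
  choose f hf using hbranch
  refine ⟨f ∘ ofLex, fun x y hxy => ?_, ?_⟩
  · obtain ⟨n, hagree, hn⟩ := hxy
    obtain ⟨hxn, hyn⟩ := Bool.lt_iff.1 hn
    have hx : f x ∈ cond (x n) (K₁ (A (res x n))) (K₀ (A (res x n))) :=
      mem_iInter.1 (hf x) (n + 1)
    have hy : f y ∈ cond (y n) (K₁ (A (res y n))) (K₀ (A (res y n))) :=
      mem_iInter.1 (hf y) (n + 1)
    rw [hxn, cond_false] at hx
    rw [hyn, cond_true, res_eq_res.2 fun m hm => (hagree m hm).symm] at hy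
    exact hlt _ (hA _) _ hx _ hy
  · rintro _ ⟨x, rfl⟩
    exact mem_iInter.1 (hf x) 0

theorem measure_eq_zero_of_forall_measure_setOf_rel_eq_zero {α : Type*} [MeasurableSpace α]
    {r : α → α → Prop} [Std.Total r] (hr : MeasurableSet {p : α × α | r p.1 p.2})
    (μ : Measure α) [SFinite μ] {S : Set α} (hS : MeasurableSet S)
    (h : ∀ x ∈ S, μ {y | r y x} = 0) : μ S = 0 := by
  set T : Set (α × α) := {p | p.1 ∈ S ∧ r p.2 p.1}
  have hT : MeasurableSet T := (measurable_fst hS).inter (measurable_swap hr)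
  have hT_null : μ.prod μ T = 0 := by
    refine (Measure.measure_prod_null hT).2 (Filter.Eventually.of_forall fun x => ?_)
    by_cases hx : x ∈ S
    · simpa [T, hx] using h x hx
    · simp [T, hx]
  have hST : S ×ˢ S ⊆ T ∪ Prod.swap ⁻¹' T := by
    rintro ⟨a, b⟩ ⟨ha, hb⟩
    rcases Std.Total.total (r := r) b a with hba | hab
    exacts [Or.inl ⟨ha, hba⟩, Or.inr ⟨hb, hab⟩]
  have : μ S * μ S = 0 := by
    rw [← Measure.prod_prod, ← nonpos_iff_eq_zero]
    calc μ.prod μ (S ×ˢ S) ≤ μ.prod μ T + μ.prod μ (Prod.swap ⁻¹' T) :=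
          (measure_mono hST).trans (measure_union_le _ _)
      _ = 0 := by rw [Measure.measurePreserving_swap.measure_preimage hT.nullMeasurableSet,
                    hT_null, add_zero]
  exact mul_self_eq_zero.1 this

section LinearOrder

variable {α : Type*} [MeasurableSpace α] [LinearOrder α]

theorem exists_measure_Iio_pos_and_measure_Ioi_pos
    (hle : MeasurableSet {p : α × α | p.1 ≤ p.2}) (μ : Measure α) [SFinite μ]
    [NullSingletonClass μ] (hμ : μ ≠ 0) : ∃ x, 0 < μ (Iio x) ∧ 0 < μ (Ioi x) := by
  have hge : MeasurableSet {p : α × α | p.2 ≤ p.1} := measurable_swap hle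
  by_contra! h
  have hS₀ : μ {x | μ (Iic x) = 0} = 0 :=
    measure_eq_zero_of_forall_measure_setOf_rel_eq_zero hle μ
      (measurableSet_eq_fun (measurable_measure_prodMk_left hge) measurable_const) fun _ hx => hx
  have hS₁ : μ {x | μ (Ici x) = 0} = 0 :=
    measure_eq_zero_of_forall_measure_setOf_rel_eq_zero (r := (· ≥ ·)) hge μ
      (measurableSet_eq_fun (measurable_measure_prodMk_left hle) measurable_const) fun _ hx => hx
  have hcover : univ ⊆ {x | μ (Iic x) = 0} ∪ {x | μ (Ici x) = 0} := by
    intro x _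
    rw [mem_union, mem_ofPred_eq, mem_ofPred_eq, ← measure_congr Iio_ae_eq_Iic,
      ← measure_congr Ioi_ae_eq_Ici, ← nonpos_iff_eq_zero, ← nonpos_iff_eq_zero]
    by_contra! hx
    exact (h x hx.1).not_gt hx.2
  exact hμ (Measure.measure_univ_eq_zero.1 (measure_mono_null hcover (measure_union_null hS₀ hS₁)))

theorem measurableSet_Iio_of_measurableSet_le (hle : MeasurableSet {p : α × α | p.1 ≤ p.2})
    (z : α) : MeasurableSet (Iio z) := by
  rw [← compl_Ici]
  exact (measurable_prodMk_left hle).compl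

theorem measurableSet_Ioi_of_measurableSet_le (hle : MeasurableSet {p : α × α | p.1 ≤ p.2})
    (z : α) : MeasurableSet (Ioi z) := by
  rw [← compl_Iic]
  exact (measurable_prodMk_right hle).compl

theorem exists_isCompact_lt_isCompact_of_measure_pos [TopologicalSpace α]
    (hle : MeasurableSet {p : α × α | p.1 ≤ p.2}) (μ : Measure α) [SFinite μ]
    [NullSingletonClass μ] [μ.InnerRegular] {K : Set α} (hK : MeasurableSet K) (hμK : 0 < μ K) :
    ∃ K₀ K₁, (IsCompact K₀ ∧ 0 < μ K₀) ∧ (IsCompact K₁ ∧ 0 < μ K₁) ∧ K₀ ⊆ K ∧ K₁ ⊆ K ∧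
      ∀ x ∈ K₀, ∀ y ∈ K₁, x < y := by
  obtain ⟨z, hz₀, hz₁⟩ := exists_measure_Iio_pos_and_measure_Ioi_pos hle (μ.restrict K)
    (by rwa [← Measure.measure_univ_pos, Measure.restrict_apply_univ])
  rw [Measure.restrict_apply' hK] at hz₀ hz₁
  obtain ⟨K₀, hK₀, hK₀c, hK₀μ⟩ :=
    ((measurableSet_Iio_of_measurableSet_le hle z).inter hK).exists_lt_isCompact hz₀
  obtain ⟨K₁, hK₁, hK₁c, hK₁μ⟩ :=
    ((measurableSet_Ioi_of_measurableSet_le hle z).inter hK).exists_lt_isCompact hz₁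
  exact ⟨K₀, K₁, ⟨hK₀c, hK₀μ⟩, ⟨hK₁c, hK₁μ⟩, fun x hx => (hK₀ hx).2, fun x hx => (hK₁ hx).2,
    fun x hx y hy => (hK₀ hx).1.trans (hK₁ hy).1⟩

theorem exists_strictMono_lex_of_measure_pos [TopologicalSpace α] [T2Space α]
    [OpensMeasurableSpace α] (hle : MeasurableSet {p : α × α | p.1 ≤ p.2}) (μ : Measure α)
    [SFinite μ] [NullSingletonClass μ] [μ.InnerRegular] {X : Set α} (hX : MeasurableSet X)
    (hμX : 0 < μ X) : ∃ f : Lex (ℕ → Bool) → α, StrictMono f ∧ range f ⊆ X := by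
  obtain ⟨K, hKX, hK, hμK⟩ := hX.exists_lt_isCompact hμX
  obtain ⟨f, hf, hfK⟩ := exists_strictMono_lex_of_forall_exists_lt_subsets
    (P := fun K => IsCompact K ∧ 0 < μ K)
    (fun K hK => ⟨hK.1, nonempty_of_measure_ne_zero hK.2.ne'⟩)
    (fun K hK => exists_isCompact_lt_isCompact_of_measure_pos hle μ hK.1.measurableSet hK.2)
    ⟨hK, hμK⟩
  exact ⟨f, hf, hfK.trans hKX⟩

end LinearOrder

theorem exists_nullSingletonClass_measure_pos_of_not_countable {β : Type*} [MeasurableSpace β]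
    [MeasurableSingletonClass β] {X : Set β} [StandardBorelSpace X] (hX : ¬X.Countable) :
    ∃ μ : Measure β, IsFiniteMeasure μ ∧ NullSingletonClass μ ∧ 0 < μ X := by
  let e : ℝ ≃ᵐ X := PolishSpace.measurableEquivOfNotCountable
    (fun _ => Cardinal.not_countable_real countable_univ) (fun h => hX (countable_coe_iff.1 h))
  let φ : ℝ → β := Subtype.val ∘ e
  have hφ : Measurable φ := measurable_subtype_coe.comp e.measurable
  have hφinj : Function.Injective φ := Subtype.val_injective.comp e.injective
  let ν : Measure ℝ := volume.restrict (Icc 0 1)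
  have : IsFiniteMeasure ν := isFiniteMeasure_restrict.2 (by simp [Real.volume_Icc])
  refine ⟨ν.map φ, inferInstance, ⟨fun y => ?_⟩, ?_⟩
  · rw [Measure.map_apply hφ (measurableSet_singleton y)]
    exact (subsingleton_singleton.preimage hφinj).measure_zero ν
  · have hφX : φ ⁻¹' X = univ := eq_univ_of_forall fun t => (e t).2
    calc (0 : ENNReal) < ν (φ ⁻¹' X) := by simp [hφX, ν, Real.volume_Icc]
      _ ≤ ν.map φ X := Measure.le_map_apply hφ.aemeasurable X

/-- The paper's Lemma: if a Polish space carries a linear order with Borel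
graph, then every uncountable Borel subset contains an increasing copy of
Cantor space (increasing with respect to the lexicographic order on
`ℕ → Bool`, where `false < true`). -/
theorem increasing_cantor_embedding_into_uncountable_borel
    {M : Type*} [TopologicalSpace M] [PolishSpace M]
    [MeasurableSpace M] [BorelSpace M] [LinearOrder M]
    (hle_borel : MeasurableSet {p : M × M | p.1 ≤ p.2})
    (X : Set M) (hX_borel : MeasurableSet X) (hX_unc : ¬ X.Countable) :
    ∃ f : (ℕ → Bool) → M,
      Set.range f ⊆ X ∧
      (∀ r s : ℕ → Bool, r ≠ s →
        ∀ n : ℕ, (∀ m : ℕ, m < n → r m = s m) → r n ≠ s n → r n < s n →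
          f r < f s) ∧
      Function.Injective f := by
  have := hX_borel.standardBorel
  obtain ⟨μ, _, _, hμX⟩ := exists_nullSingletonClass_measure_pos_of_not_countable hX_unc
  obtain ⟨f, hf, hfX⟩ := exists_strictMono_lex_of_measure_pos hle_borel μ hX_borel hμX
  refine ⟨f ∘ toLex, (range_comp_subset_range _ _).trans hfX,
    fun r s _ n hagree _ hlt => hf ⟨n, hagree, hlt⟩, hf.injective.comp toLex.injective⟩
end

section
/- Let M be a Polish space equipped with a binary operation + : M × M → M that is Borel measurable, and with a linear order ≤ satisfying: for all x, y, x ≤ y if and only if there exists z with x + z = y. Then the graph {(x, y) : M × M | x ≤ y} is a Borel subset of M × M. -/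
/-!
The graph `{(x, y) | x ≤ y}` is the projection of the Borel set `{(x, y, z) | x + z = y}`, and its
complement `{(x, y) | y < x}` is the projection of `{(x, y, z) | y + z = x ∧ x ≠ y}`. Both are
therefore analytic, and Suslin's theorem makes an analytic set with analytic complement Borel.
-/

open MeasureTheory

theorem MeasureTheory.analyticSet_setOf_exists {X Y : Type*} [TopologicalSpace X] [PolishSpace X]
    [MeasurableSpace X] [BorelSpace X] [MeasurableSpace Y] [StandardBorelSpace Y]
    {P : X → Y → Prop} (hP : MeasurableSet {q : X × Y | P q.1 q.2}) :
    AnalyticSet {x | ∃ y, P x y} := by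
  convert hP.analyticSet_image measurable_fst using 1
  ext x
  simp

/-- If a Polish space carries a Borel binary operation `add` and a linear order
defined from it by `x ≤ y ↔ ∃ z, add (x, z) = y`, then the graph of the order
is Borel (both it and its complement are analytic, so Suslin's theorem
applies). -/
theorem order_graph_borel_of_borel_add
    {M : Type*} [TopologicalSpace M] [PolishSpace M]
    [MeasurableSpace M] [BorelSpace M] [LinearOrder M]
    (add : M × M → M) (hadd_borel : Measurable add)
    (hord : ∀ x y : M, x ≤ y ↔ ∃ z : M, add (x, z) = y) :
    MeasurableSet {p : M × M | p.1 ≤ p.2} := by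
  have hle : {p : M × M | p.1 ≤ p.2} = {p | ∃ z, add (p.1, z) = p.2} := by
    ext p
    exact hord p.1 p.2
  have hgt : {p : M × M | p.1 ≤ p.2}ᶜ = {p | ∃ z, add (p.2, z) = p.1 ∧ p.1 ≠ p.2} := by
    ext p
    rw [Set.mem_compl_iff, Set.mem_ofPred_eq, Set.mem_ofPred_eq, not_le, lt_iff_le_and_ne, hord,
      ne_comm, exists_and_right]
  have hle_analytic : AnalyticSet {p : M × M | p.1 ≤ p.2} := by
    rw [hle]
    exact analyticSet_setOf_exists (measurableSet_eq_fun (by fun_prop) (by fun_prop))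
  have hgt_analytic : AnalyticSet {p : M × M | p.1 ≤ p.2}ᶜ := by
    rw [hgt]
    exact analyticSet_setOf_exists
      ((measurableSet_eq_fun (by fun_prop) (by fun_prop)).inter
        (measurableSet_eq_fun (by fun_prop) (by fun_prop)).compl)
  exact hle_analytic.measurableSet_of_compl hgt_analytic
end

section
/- Let M be an uncountable Polish space equipped with a linear order ≤ whose graph {(x, y) : M × M | x ≤ y} is a Borel subset of M × M. Then there exists c ∈ M such that the initial segment {x : M | x ≤ c} is uncountable. -/
/-
If every initial segment were countable, take a nonzero atomless measure `μ` on `M` (Lebesgue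
measure transported along a Borel isomorphism `ℝ ≃ᵐ M`). Fubini computes `(μ ⊗ μ) {x ≤ y}` once
as `∫ μ (Iic y) dμ(y) = 0` and once as `∫ μ (Ici x) dμ(x) = μ(M)²`, since the complement `Iio x`
of `Ici x` is null; hence `μ = 0`.
-/

open MeasureTheory Set

theorem MeasureTheory.Measure.eq_zero_of_measure_Iic_eq_zero {α : Type*} [MeasurableSpace α]
    [LinearOrder α] (hle : MeasurableSet {p : α × α | p.1 ≤ p.2}) (μ : Measure α) [SFinite μ]
    (hIic : ∀ c, μ (Iic c) = 0) : μ = 0 := by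
  have hIci (x : α) : μ (Ici x) = μ univ :=
    measure_congr <| ae_eq_univ.2 <| measure_mono_null (by simp [Iio_subset_Iic_self]) (hIic x)
  have hzero : μ.prod μ {p : α × α | p.1 ≤ p.2} = 0 := by
    rw [Measure.prod_apply_symm hle]
    exact lintegral_eq_zero_of_ae_eq_zero (Filter.Eventually.of_forall hIic)
  have hsquare : μ.prod μ {p : α × α | p.1 ≤ p.2} = μ univ * μ univ := by
    rw [Measure.prod_apply hle]
    exact (lintegral_congr hIci).trans (lintegral_const _)
  rw [← Measure.measure_univ_eq_zero, ← mul_self_eq_zero, ← hsquare, hzero]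

theorem StandardBorelSpace.exists_measure_ne_zero_nullSingletonClass (α : Type*)
    [MeasurableSpace α] [StandardBorelSpace α] [Uncountable α] :
    ∃ μ : Measure α, SFinite μ ∧ NullSingletonClass μ ∧ μ ≠ 0 := by
  let e : ℝ ≃ᵐ α := PolishSpace.measurableEquivOfNotCountable not_countable not_countable
  refine ⟨volume.map e, inferInstance, ⟨fun x => ?_⟩, ?_⟩
  · rw [e.map_apply, ← e.image_symm, image_singleton]
    exact measure_singleton _
  · simp [← Measure.measure_univ_eq_zero, e.map_apply]

/-- In an uncountable Polish space with a Borel linear order, some initial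
segment is uncountable (the cut of countable initial segments is proper). -/
theorem exists_uncountable_initial_segment
    {M : Type*} [TopologicalSpace M] [PolishSpace M] [Uncountable M]
    [MeasurableSpace M] [BorelSpace M] [LinearOrder M]
    (hle_borel : MeasurableSet {p : M × M | p.1 ≤ p.2}) :
    ∃ c : M, ¬ {x : M | x ≤ c}.Countable := by
  obtain ⟨μ, _, _, hμ⟩ := StandardBorelSpace.exists_measure_ne_zero_nullSingletonClass M
  by_contra! h
  exact hμ (μ.eq_zero_of_measure_Iic_eq_zero hle_borel fun c => (h c).measure_zero μ)
end

section
/- Let (M, d) be a complete metric space and let s : Finset ℕ → M be an injective function such that for every n ≥ 1 and every S ⊆ {0, 1, …, n−1}, d(s(S), s(S ∪ {n})) < 5^{−n} · min{ d(s(T), s(U)) : T, U ⊆ {0, 1, …, n−1}, T ≠ U }. Then: (1) for every set A ⊆ ℕ, the sequence N ↦ s(A ∩ {0, 1, …, N−1}) converges to a limit z(A) ∈ M; and (2) the map A ↦ z(A) from subsets of ℕ to M is injective. -/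
/-!
Write `x_A N := s (A ∩ {0, …, N-1})`. As soon as `T ≠ U` are subsets of `{0, …, n-1}`, every
increment `d(x_A m, x_A (m+1))` with `m ≥ n` is `0` or below `5⁻ᵐ d(s T, s U)`, so `x_A` is
Cauchy and its limit lies within `d(s T, s U) / 4` of `x_A n`. If `A ≠ B`, their truncations
`T`, `U` at some level `n` differ, and the two limits lie within a quarter of `d(s T, s U) > 0`
of `s T` and of `s U` respectively, so they differ.
-/

open Topology Filter Finset

open scoped Classical

section LeGeometricFrom

variable {α : Type*} [PseudoMetricSpace α] {r C : ℝ} {f : ℕ → α} {n : ℕ}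

theorem cauchySeq_of_le_geometric_from (hr : r < 1)
    (hu : ∀ m ≥ n, dist (f m) (f (m + 1)) ≤ C * r ^ m) : CauchySeq f := by
  refine (cauchySeq_shift n).mp (cauchySeq_of_le_geometric r (C * r ^ n) hr fun k => ?_)
  simpa [add_right_comm k 1 n, pow_add, mul_assoc, mul_comm] using hu (k + n) (by omega)

theorem dist_le_of_le_geometric_from_of_tendsto {a : α} (hr : r < 1)
    (hu : ∀ m ≥ n, dist (f m) (f (m + 1)) ≤ C * r ^ m) (ha : Tendsto f atTop (𝓝 a)) :
    dist (f n) a ≤ C * r ^ n / (1 - r) := by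
  have hshift : ∀ k, dist (f (k + n)) (f (k + 1 + n)) ≤ C * r ^ n * r ^ k := fun k => by
    simpa [add_right_comm k 1 n, pow_add, mul_assoc, mul_comm] using hu (k + n) (by omega)
  simpa using dist_le_of_le_geometric_of_tendsto₀ r _ hr hshift
    (ha.comp (tendsto_add_atTop_nat n))

end LeGeometricFrom

noncomputable def truncation (A : Set ℕ) (N : ℕ) : Finset ℕ :=
  (range N).filter (· ∈ A)

theorem truncation_subset_range (A : Set ℕ) (N : ℕ) : truncation A N ⊆ range N :=
  filter_subset _ _

theorem truncation_succ (A : Set ℕ) (N : ℕ) :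
    truncation A (N + 1) = if N ∈ A then insert N (truncation A N) else truncation A N := by
  by_cases h : N ∈ A <;> simp [truncation, range_add_one, filter_insert, h]

theorem exists_truncation_ne {A B : Set ℕ} (h : A ≠ B) :
    ∃ N, truncation A N ≠ truncation B N := by
  obtain ⟨n, hn⟩ : ∃ n, ¬(n ∈ A ↔ n ∈ B) := by
    by_contra! hAB
    exact h (Set.ext hAB)
  refine ⟨n + 1, fun hN => hn ?_⟩
  simpa [truncation] using congrArg (n ∈ ·) hN

theorem pos_of_ne_of_subset_range {T U : Finset ℕ} {n : ℕ} (hT : T ⊆ range n)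
    (hU : U ⊆ range n) (hTU : T ≠ U) : 0 < n := by
  rcases Nat.eq_zero_or_pos n with rfl | hn
  · exact absurd ((subset_empty.mp hT).trans (subset_empty.mp hU).symm) hTU
  · exact hn

def HasSmallIncrements {M : Type*} [PseudoMetricSpace M] (s : Finset ℕ → M) : Prop :=
  ∀ n : ℕ, 1 ≤ n → ∀ S ⊆ range n, ∀ T ⊆ range n, ∀ U ⊆ range n, T ≠ U →
    dist (s S) (s (insert n S)) < (5 : ℝ) ^ (-(n : ℤ)) * dist (s T) (s U)

namespace HasSmallIncrements

variable {M : Type*} [PseudoMetricSpace M] {s : Finset ℕ → M} {T U : Finset ℕ} {n : ℕ}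

theorem dist_pos (hs : HasSmallIncrements s) (hT : T ⊆ range n) (hU : U ⊆ range n)
    (hTU : T ≠ U) : 0 < dist (s T) (s U) := by
  have hlt := hs n (pos_of_ne_of_subset_range hT hU hTU) T hT T hT U hU hTU
  exact pos_of_mul_pos_right (dist_nonneg.trans_lt hlt) (by positivity)

theorem dist_truncation_succ_le (hs : HasSmallIncrements s) (A : Set ℕ) (hT : T ⊆ range n)
    (hU : U ⊆ range n) (hTU : T ≠ U) {m : ℕ} (hm : n ≤ m) :
    dist (s (truncation A m)) (s (truncation A (m + 1))) ≤ dist (s T) (s U) * 5⁻¹ ^ m := by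
  have hTm := hT.trans (range_subset_range.mpr hm)
  have hUm := hU.trans (range_subset_range.mpr hm)
  rw [truncation_succ]
  split_ifs
  · have hlt := hs m (pos_of_ne_of_subset_range hTm hUm hTU) _
      (truncation_subset_range A m) T hTm U hUm hTU
    rw [zpow_neg, zpow_natCast, ← inv_pow, mul_comm] at hlt
    exact hlt.le
  · rw [dist_self]
    positivity

theorem cauchySeq_truncation (hs : HasSmallIncrements s) (A : Set ℕ) :
    CauchySeq fun N => s (truncation A N) :=
  cauchySeq_of_le_geometric_from (n := 1) (by norm_num) fun _ =>
    hs.dist_truncation_succ_le A (T := ∅) (U := {0}) (empty_subset _) (by simp)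
      (singleton_ne_empty 0).symm

theorem dist_truncation_le_of_tendsto (hs : HasSmallIncrements s) {A : Set ℕ} {a : M}
    (hA : Tendsto (fun N => s (truncation A N)) atTop (𝓝 a)) (hT : T ⊆ range n)
    (hU : U ⊆ range n) (hTU : T ≠ U) :
    dist (s (truncation A n)) a ≤ dist (s T) (s U) / 4 := by
  have hpow : (5⁻¹ : ℝ) ^ n ≤ 5⁻¹ :=
    pow_le_of_le_one (by norm_num) (by norm_num) (pos_of_ne_of_subset_range hT hU hTU).ne'
  calc dist (s (truncation A n)) a
      ≤ dist (s T) (s U) * 5⁻¹ ^ n / (1 - 5⁻¹) :=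
        dist_le_of_le_geometric_from_of_tendsto (by norm_num)
          (fun _ => hs.dist_truncation_succ_le A hT hU hTU) hA
    _ ≤ dist (s T) (s U) * 5⁻¹ / (1 - 5⁻¹) := by gcongr
    _ = dist (s T) (s U) / 4 := by ring

theorem eq_of_tendsto_truncation (hs : HasSmallIncrements s) {A B : Set ℕ} {a : M}
    (hA : Tendsto (fun N => s (truncation A N)) atTop (𝓝 a))
    (hB : Tendsto (fun N => s (truncation B N)) atTop (𝓝 a)) : A = B := by
  by_contra hAB
  obtain ⟨N, hN⟩ := exists_truncation_ne hAB
  have hT := truncation_subset_range A N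
  have hU := truncation_subset_range B N
  have hD := hs.dist_pos hT hU hN
  have hAa := hs.dist_truncation_le_of_tendsto hA hT hU hN
  have hBa := hs.dist_truncation_le_of_tendsto hB hT hU hN
  linarith [dist_triangle_right (s (truncation A N)) (s (truncation B N)) a]

end HasSmallIncrements

theorem limits_exist_and_injective_general
    {M : Type*} [MetricSpace M] [CompleteSpace M]
    (s : Finset ℕ → M)
    (hclose : ∀ n : ℕ, 1 ≤ n → ∀ S ⊆ Finset.range n,
      ∀ T ⊆ Finset.range n, ∀ U ⊆ Finset.range n, T ≠ U →
        dist (s S) (s (insert n S)) < (5 : ℝ) ^ (-(n : ℤ)) * dist (s T) (s U)) :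
    ∃ z : Set ℕ → M,
      (∀ A : Set ℕ,
        Tendsto (fun N : ℕ => s ((Finset.range N).filter (· ∈ A)))
          atTop (nhds (z A))) ∧
      Function.Injective z := by
  have hs : HasSmallIncrements s := hclose
  choose z hz using fun A => cauchySeq_tendsto_of_complete (hs.cauchySeq_truncation A)
  exact ⟨z, hz, fun A B hAB => hs.eq_of_tendsto_truncation (hz A) (hAB ▸ hz B)⟩

/-- The 'routine to verify' step: if the values `s S` of an injective function
on finite sets satisfy the rapid-closeness condition (`d(s S, s (S ∪ {n}))` is
less than `5⁻ⁿ` times the minimum distance between values on distinct subsets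
of `{0, …, n−1}`), then the partial "sums" along every `A ⊆ ℕ` converge, and
the map sending `A` to the limit is injective. -/
theorem limits_exist_and_injective
    {M : Type*} [MetricSpace M] [CompleteSpace M]
    (s : Finset ℕ → M) (hs_inj : Function.Injective s)
    (hclose : ∀ n : ℕ, 1 ≤ n → ∀ S ⊆ Finset.range n,
      ∀ T ⊆ Finset.range n, ∀ U ⊆ Finset.range n, T ≠ U →
        dist (s S) (s (insert n S)) < (5 : ℝ) ^ (-(n : ℤ)) * dist (s T) (s U)) :
    ∃ z : Set ℕ → M,
      (∀ A : Set ℕ,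
        Tendsto (fun N : ℕ => s ((Finset.range N).filter (· ∈ A)))
          atTop (nhds (z A))) ∧
      Function.Injective z :=
  limits_exist_and_injective_general s hclose
end

section
/- Let M be a linearly ordered commutative semiring in which addition is strictly monotone, and let y : ℕ → M satisfy 0 < y(0) and 5·y(i) < y(i+1) for all i. Let A, B ⊆ ℕ be disjoint finite sets with A nonempty, let m be the maximum element of A, and suppose every element of B is less than m. Then 2·(∑_{i ∈ B} y(i)) + y(m) < 2·(∑_{i ∈ A} y(i)). -/
/-!
Growth by a factor `n + 1 ≥ 3` makes each term dominate `n` times the sum of all earlier ones,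
by induction: `n • (S + y k) < y k + n • y k = (n + 1) • y k < y (k + 1)`. Hence
`2 • ∑_B y < y m`, while `y m ≤ ∑_A y` because `m ∈ A`, and the two halves of
`2 • ∑_A y ≥ y m + y m` absorb the two summands on the left.
-/

open Finset

section GrowthSums

variable {M : Type*} [AddCommMonoid M] [LinearOrder M] [IsOrderedCancelAddMonoid M]
  {y : ℕ → M} {n : ℕ}

theorem pos_of_succ_nsmul_lt (h0 : 0 < y 0) (hy : ∀ i, (n + 1) • y i < y (i + 1)) (i : ℕ) :
    0 < y i := by
  induction i with
  | zero => exact h0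
  | succ i ih => exact (nsmul_pos ih n.succ_ne_zero).trans (hy i)

theorem nsmul_sum_range_lt (h0 : 0 < y 0) (hy : ∀ i, (n + 1) • y i < y (i + 1)) (k : ℕ) :
    n • ∑ i ∈ range k, y i < y k := by
  induction k with
  | zero => simpa using h0
  | succ k ih =>
    calc n • ∑ i ∈ range (k + 1), y i = n • ∑ i ∈ range k, y i + n • y k := by
          rw [sum_range_succ, nsmul_add]
      _ < y k + n • y k := add_lt_add_left ih _
      _ = (n + 1) • y k := by rw [succ_nsmul, add_comm]
      _ < y (k + 1) := hy k

theorem nsmul_sum_lt_of_forall_lt (h0 : 0 < y 0) (hy : ∀ i, (n + 1) • y i < y (i + 1))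
    {B : Finset ℕ} {m : ℕ} (hB : ∀ b ∈ B, b < m) : n • ∑ i ∈ B, y i < y m := by
  have hBm : ∑ i ∈ B, y i ≤ ∑ i ∈ range m, y i :=
    sum_le_sum_of_subset_of_nonneg (fun b hb ↦ mem_range.2 (hB b hb))
      fun i _ _ ↦ (pos_of_succ_nsmul_lt h0 hy i).le
  exact (nsmul_le_nsmul_right hBm n).trans_lt (nsmul_sum_range_lt h0 hy m)

theorem add_lt_two_nsmul_sum {ι : Type*} {f : ι → M} {s : Finset ι} {a : ι} {x : M}
    (hf : ∀ i ∈ s, 0 ≤ f i) (ha : a ∈ s) (hx : x < f a) : x + f a < 2 • ∑ i ∈ s, f i :=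
  calc x + f a < f a + f a := add_lt_add_left hx _
    _ = 2 • f a := (two_nsmul _).symm
    _ ≤ 2 • ∑ i ∈ s, f i := nsmul_le_nsmul_right (single_le_sum hf ha) 2

theorem two_nsmul_sum_add_lt_two_nsmul_sum (h0 : 0 < y 0)
    (hy : ∀ i, (n + 1) • y i < y (i + 1)) (hn : 2 ≤ n) {A B : Finset ℕ} {m : ℕ} (hm : m ∈ A)
    (hB : ∀ b ∈ B, b < m) : 2 • ∑ i ∈ B, y i + y m < 2 • ∑ i ∈ A, y i := by
  have hpos := pos_of_succ_nsmul_lt h0 hy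
  have hBm : 2 • ∑ i ∈ B, y i < y m :=
    (nsmul_le_nsmul_left (sum_nonneg fun i _ ↦ (hpos i).le) hn).trans_lt
      (nsmul_sum_lt_of_forall_lt h0 hy hB)
  exact add_lt_two_nsmul_sum (fun i _ ↦ (hpos i).le) hm hBm

end GrowthSums

theorem additive_growth_inequality_general
    {M : Type*} [CommSemiring M] [LinearOrder M]
    (hadd_mono : ∀ a : M, StrictMono (fun x : M => a + x))
    (y : ℕ → M) (hy0 : 0 < y 0) (hy : ∀ i : ℕ, 5 * y i < y (i + 1))
    (A B : Finset ℕ)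
    (m : ℕ) (hmA : m ∈ A)
    (hB : ∀ b ∈ B, b < m) :
    2 * (∑ i ∈ B, y i) + y m < 2 * ∑ i ∈ A, y i := by
  have := IsOrderedCancelAddMonoid.of_add_lt_add_left fun a _ _ h ↦ hadd_mono a h
  have hy' : ∀ i, (4 + 1) • y i < y (i + 1) := by simpa [nsmul_eq_mul] using hy
  simpa [nsmul_eq_mul] using two_nsmul_sum_add_lt_two_nsmul_sum hy0 hy' (by norm_num) hmA hB

/-- The key additive growth inequality: if `y` grows faster than powers of 5,
`A` and `B` are disjoint finite sets, `m = max A`, and every element of `B` is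
below `m`, then `2·(∑_{i∈B} y i) + y m < 2·(∑_{i∈A} y i)`. -/
theorem additive_growth_inequality
    {M : Type*} [CommSemiring M] [LinearOrder M]
    (hadd_mono : ∀ a : M, StrictMono (fun x : M => a + x))
    (hadd_mono' : ∀ a : M, StrictMono (fun x : M => x + a))
    (y : ℕ → M) (hy0 : 0 < y 0) (hy : ∀ i : ℕ, 5 * y i < y (i + 1))
    (A B : Finset ℕ) (hAB : Disjoint A B) (hA : A.Nonempty)
    (m : ℕ) (hmA : m ∈ A) (hmax : ∀ a ∈ A, a ≤ m)
    (hB : ∀ b ∈ B, b < m) :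
    2 * (∑ i ∈ B, y i) + y m < 2 * ∑ i ∈ A, y i :=
  additive_growth_inequality_general hadd_mono y hy0 hy A B m hmA hB
end

section
/- Let μ be the coin-flipping measure on Cantor space ℕ → Bool. Let F ⊆ ℕ be a finite set with |F| = k, and let E ⊆ (ℕ → Bool) be a measurable set such that any two elements of E that agree at every coordinate outside F are equal (i.e., the restriction map r ↦ r|_{ℕ∖F} is injective on E). Then μ(E) ≤ 2^{−k}. -/
/-!
Flipping the bits of a configuration on a subset `S ⊆ F` preserves the coin-flipping measure,
since it permutes the cylinders of each fixed shape. Injectivity of the restriction to the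
coordinates outside `F` makes the `2^k` preimages of `E` under these flips pairwise disjoint,
and they all have measure `μ E`, so `2^k μ(E) ≤ 1`.
-/

open MeasureTheory MeasurableSpace

section PointCylinders

variable {ι α : Type*}

def pointCylinders (ι α : Type*) : Set (Set (ι → α)) :=
  {S | ∃ (F : Finset ι) (g : ι → α), (F : Set ι).pi (fun i => {g i}) = S}

theorem isPiSystem_pointCylinders : IsPiSystem (pointCylinders ι α) := by
  classical
  rintro _ ⟨F₁, g₁, rfl⟩ _ ⟨F₂, g₂, rfl⟩ ⟨r₀, hr₁, hr₂⟩
  -- any common point of two cylinders serves as the centre of their intersection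
  refine ⟨F₁ ∪ F₂, r₀, ?_⟩
  ext r
  simp only [Set.mem_pi, Finset.coe_union, Set.mem_union, Set.mem_singleton_iff,
    Set.mem_inter_iff, Finset.mem_coe] at hr₁ hr₂ ⊢
  constructor
  · intro h
    exact ⟨fun i hi => (h i (.inl hi)).trans (hr₁ i hi),
      fun i hi => (h i (.inr hi)).trans (hr₂ i hi)⟩
  · rintro ⟨h₁, h₂⟩ i (hi | hi)
    · exact (h₁ i hi).trans (hr₁ i hi).symm
    · exact (h₂ i hi).trans (hr₂ i hi).symm

variable [MeasurableSpace α] [MeasurableSingletonClass α]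

theorem measurableSet_pi_singleton (F : Finset ι) (g : ι → α) :
    MeasurableSet ((F : Set ι).pi fun i => {g i}) :=
  .pi F.countable_toSet fun _ _ => measurableSet_singleton _

variable [Countable α]

theorem generateFrom_pointCylinders : generateFrom (pointCylinders ι α) = MeasurableSpace.pi := by
  apply le_antisymm
  · refine generateFrom_le ?_
    rintro _ ⟨F, g, rfl⟩
    exact measurableSet_pi_singleton F g
  · rw [pi_eq_generateFrom_projections]
    refine generateFrom_le ?_
    rintro _ ⟨i, A, -, rfl⟩
    have hA : Function.eval i ⁻¹' A = ⋃ a ∈ A, ({i} : Set ι).pi fun _ => {a} := by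
      ext r
      simp
    rw [hA]
    exact .biUnion A.to_countable fun a _ =>
      measurableSet_generateFrom ⟨{i}, fun _ => a, by simp⟩

theorem ext_of_pointCylinders {μ ν : Measure (ι → α)} [IsFiniteMeasure μ]
    (h : ∀ (F : Finset ι) (g : ι → α),
      μ ((F : Set ι).pi fun i => {g i}) = ν ((F : Set ι).pi fun i => {g i})) :
    μ = ν := by
  refine ext_of_generate_finite _ generateFrom_pointCylinders.symm isPiSystem_pointCylinders
    (by rintro _ ⟨F, g, rfl⟩; exact h F g) ?_
  rcases isEmpty_or_nonempty (ι → α) with hempty | ⟨⟨g⟩⟩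
  · simp [Set.univ_eq_empty_iff.2 hempty]
  · simpa using h ∅ g

theorem measurePreserving_pi_perm {μ : Measure (ι → α)} [IsFiniteMeasure μ]
    (hμ : ∀ (F : Finset ι) (g g' : ι → α),
      μ ((F : Set ι).pi fun i => {g i}) = μ ((F : Set ι).pi fun i => {g' i}))
    (e : ι → Equiv.Perm α) :
    MeasurePreserving (fun r i => e i (r i)) μ μ := by
  have he : Measurable fun (r : ι → α) i => e i (r i) :=
    measurable_pi_lambda _ fun i => (measurable_of_countable (e i)).comp (measurable_pi_apply i)
  refine ⟨he, ext_of_pointCylinders fun F g => ?_⟩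
  have hpre : (fun (r : ι → α) i => e i (r i)) ⁻¹' ((F : Set ι).pi fun i => {g i}) =
      (F : Set ι).pi fun i => {(e i).symm (g i)} := by
    ext r
    simp [← Equiv.eq_symm_apply]
  rw [Measure.map_apply he (measurableSet_pi_singleton F g), hpre, hμ]

end PointCylinders

theorem card_mul_measure_le_one_of_pairwiseDisjoint {X β : Type*} [MeasurableSpace X]
    {μ : Measure X} [IsProbabilityMeasure μ] {s : Finset β} {T : β → X → X}
    (hT : ∀ j ∈ s, MeasurePreserving (T j) μ μ) {E : Set X} (hE : MeasurableSet E)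
    (hdisj : (s : Set β).PairwiseDisjoint fun j => T j ⁻¹' E) :
    s.card * μ E ≤ 1 :=
  calc (s.card : ENNReal) * μ E = ∑ j ∈ s, μ (T j ⁻¹' E) := by
        rw [Finset.sum_congr rfl fun j hj => (hT j hj).measure_preimage hE.nullMeasurableSet,
          Finset.sum_const, nsmul_eq_mul]
    _ = μ (⋃ j ∈ s, T j ⁻¹' E) :=
        (measure_biUnion_finset hdisj fun j hj => (hT j hj).measurable hE).symm
    _ ≤ 1 := prob_le_one

section FlipOn

variable {ι : Type*} [DecidableEq ι]

def flipOn (S : Finset ι) (r : ι → Bool) : ι → Bool :=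
  fun i => if i ∈ S then !r i else r i

theorem flipOn_apply_of_notMem {S : Finset ι} {i : ι} (hi : i ∉ S) (r : ι → Bool) :
    flipOn S r i = r i := by
  simp [flipOn, hi]

theorem flipOn_left_injective (r : ι → Bool) : Function.Injective fun S => flipOn S r := by
  intro S S' h
  ext i
  have hi := congrFun h i
  by_cases hS : i ∈ S <;> by_cases hS' : i ∈ S' <;> simp_all [flipOn]

theorem measurePreserving_flipOn {μ : Measure (ι → Bool)} [IsFiniteMeasure μ]
    (hμ : ∀ (F : Finset ι) (g g' : ι → Bool),
      μ ((F : Set ι).pi fun i => {g i}) = μ ((F : Set ι).pi fun i => {g' i}))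
    (S : Finset ι) :
    MeasurePreserving (flipOn S) μ μ := by
  convert measurePreserving_pi_perm hμ fun i => if i ∈ S then Equiv.boolNot else 1 using 1
  ext r i
  by_cases hi : i ∈ S <;> simp [flipOn, hi]

theorem pairwiseDisjoint_preimage_flipOn {F : Finset ι} {E : Set (ι → Bool)}
    (hinj : ∀ r₁ ∈ E, ∀ r₂ ∈ E, (∀ n ∉ F, r₁ n = r₂ n) → r₁ = r₂) :
    (F.powerset : Set (Finset ι)).PairwiseDisjoint fun S => flipOn S ⁻¹' E := by
  intro S hS S' hS' hne
  refine Set.disjoint_left.2 fun r hr hr' => hne (flipOn_left_injective r ?_)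
  refine hinj _ hr _ hr' fun n hn => ?_
  exact (flipOn_apply_of_notMem (fun h => hn (Finset.mem_powerset.1 hS h)) r).trans
    (flipOn_apply_of_notMem (fun h => hn (Finset.mem_powerset.1 hS' h)) r).symm

end FlipOn

/-- With respect to the coin-flipping measure on Cantor space (characterized by
its values `2^{-|F|}` on cylinders), a measurable set on which the restriction
map to the coordinates outside a `k`-element finite set `F` is injective has
measure at most `2^{-k}`. -/
theorem measure_le_of_injective_restriction
    (μ : Measure (ℕ → Bool)) [IsProbabilityMeasure μ]
    (hμ : ∀ (F : Finset ℕ) (g : ℕ → Bool),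
      μ {r : ℕ → Bool | ∀ i ∈ F, r i = g i} = (2 : ENNReal)⁻¹ ^ F.card)
    (F : Finset ℕ) (k : ℕ) (hF : F.card = k)
    (E : Set (ℕ → Bool)) (hE : MeasurableSet E)
    (hinj : ∀ r₁ ∈ E, ∀ r₂ ∈ E, (∀ n ∉ F, r₁ n = r₂ n) → r₁ = r₂) :
    μ E ≤ (2 : ENNReal)⁻¹ ^ k := by
  have hflip : ∀ S, MeasurePreserving (flipOn S) μ μ :=
    measurePreserving_flipOn fun F g g' => (hμ F g).trans (hμ F g').symm
  have hcount := card_mul_measure_le_one_of_pairwiseDisjoint (fun S _ => hflip S) hE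
    (pairwiseDisjoint_preimage_flipOn hinj)
  rw [Finset.card_powerset, hF, Nat.cast_pow, Nat.cast_ofNat] at hcount
  rw [← ENNReal.inv_pow, ENNReal.le_inv_iff_mul_le, mul_comm]
  exact hcount
end

section
/- Let (C_i)_{i ∈ ℕ} be a sequence of closed nowhere dense subsets of (ℕ → Bool) × (ℕ → Bool). Then there exists a nonempty perfect closed set P ⊆ (ℕ → Bool) such that for all x, y ∈ P with x ≠ y and all i, the pair (x, y) does not belong to C_i. -/
/-!
Replace each `C i` by the dense open set `W i` of pairs lying neither in `closure (C i)` nor on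
the diagonal. Build a Cantor scheme of cylinders: level `n` assigns a cylinder to every
`s : Fin n → Bool`, each cylinder of level `n + 1` lies in the one of its parent, and the
cylinders of two distinct nodes of level `n + 1` span a box inside `W 0 ∩ ⋯ ∩ W n`. A level is
obtained from the previous one by treating the pairs of nodes one at a time, shrinking the two
cylinders until their product lies in the dense open set. The induced map on Cantor space is
continuous and sends distinct points into every `W i`; in particular it is injective, so its
range is a nonempty perfect set.
-/

open Set Filter Topology Function PiNat

instance Pi.perfectSpace {ι : Type*} [Infinite ι] {X : ι → Type*} [∀ i, TopologicalSpace (X i)]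
    [∀ i, Nontrivial (X i)] : PerfectSpace (∀ i, X i) where
  univ_preperfect x _ := by
    classical
    refine accPt_iff_nhds.2 fun U hU => ?_
    obtain ⟨I, hI, t, ht, hIU⟩ := Filter.mem_pi.1 (nhds_pi.subst (motive := fun l => U ∈ l) hU)
    obtain ⟨i, hi⟩ := hI.exists_notMem
    obtain ⟨b, hb⟩ := exists_ne (x i)
    refine ⟨update x i b, ⟨hIU fun j hj => ?_, mem_univ _⟩,
      fun h => hb (by simpa using congrFun h i)⟩
    rw [update_of_ne (ne_of_mem_of_not_mem hj hi)]
    exact mem_of_mem_nhds (ht j)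

theorem dense_compl_diagonal {X : Type*} [TopologicalSpace X] [PerfectSpace X] :
    Dense (diagonal X)ᶜ := by
  refine interior_eq_empty_iff_dense_compl.1 (eq_empty_of_forall_notMem fun ⟨x, y⟩ hxy => ?_)
  obtain rfl : x = y := mem_diagonal_iff.1 (interior_subset hxy)
  obtain ⟨A, hA, B, hB, hAB⟩ := mem_nhds_prod_iff.1 (mem_interior_iff_mem_nhds.1 hxy)
  obtain ⟨a, hax, haA⟩ := Filter.nonempty_of_mem (inter_mem_nhdsWithin {x}ᶜ hA)
  exact hax (hAB (mk_mem_prod haA (mem_of_mem_nhds hB)))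

theorem Continuous.perfect_range {X Y : Type*} [TopologicalSpace X] [TopologicalSpace Y]
    [CompactSpace X] [PerfectSpace X] [T2Space Y] {f : X → Y} (hf : Continuous f)
    (hinj : Injective f) : Perfect (range f) := by
  refine ⟨(isCompact_range hf).isClosed, ?_⟩
  rintro _ ⟨x, rfl⟩
  refine accPt_iff_nhds.2 fun U hU => ?_
  obtain ⟨a, hax, haU⟩ := Filter.nonempty_of_mem (inter_mem_nhdsWithin {x}ᶜ (hf.continuousAt hU))
  exact ⟨f a, ⟨haU, mem_range_self a⟩, hinj.ne hax⟩

namespace PiNat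

variable {E : ℕ → Type*}

theorem cylinder_subset_cylinder {x y : ∀ n, E n} {m n : ℕ} (hy : y ∈ cylinder x m) (h : m ≤ n) :
    cylinder y n ⊆ cylinder x m :=
  (cylinder_anti y h).trans (mem_cylinder_iff_eq.1 hy).subset

theorem diag_mem_cylinder {a : ℕ → ∀ n, E n} {ℓ : ℕ → ℕ} (hℓ : StrictMono ℓ)
    (ha : ∀ n, a (n + 1) ∈ cylinder (a n) (ℓ n)) (n : ℕ) :
    (fun k => a (k + 1) k) ∈ cylinder (a n) (ℓ n) := by
  have nested : ∀ {m n}, n ≤ m → a m ∈ cylinder (a n) (ℓ n) := by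
    intro m n hnm
    induction m, hnm using Nat.le_induction with
    | base => exact self_mem_cylinder _ _
    | succ m hnm ih => exact cylinder_subset_cylinder ih (hℓ.monotone hnm) (ha m)
  intro i hi
  calc a (i + 1) i = a (max n (i + 1)) i :=
        (nested (le_max_right _ _) i ((Nat.lt_succ_self i).trans_le (hℓ.id_le _))).symm
    _ = a n i := nested (le_max_left _ _) i hi

variable [∀ n, TopologicalSpace (E n)] [∀ n, DiscreteTopology (E n)]

theorem eventually_cylinder_subset {x : ∀ n, E n} {U : Set (∀ n, E n)} (hU : U ∈ 𝓝 x) :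
    ∀ᶠ n in atTop, cylinder x n ⊆ U := by
  obtain ⟨_, ⟨y, n, rfl⟩, hx, hyU⟩ := (isTopologicalBasis_cylinders E).mem_nhds_iff.1 hU
  exact eventually_atTop.2 ⟨n, fun m hm => cylinder_subset_cylinder hx hm |>.trans hyU⟩

theorem exists_cylinder_prod_subset {W : Set ((∀ n, E n) × (∀ n, E n))} (hWo : IsOpen W)
    (hWd : Dense W) (x y : ∀ n, E n) (ℓ : ℕ) :
    ∃ x' ∈ cylinder x ℓ, ∃ y' ∈ cylinder y ℓ, ∃ m > ℓ, cylinder x' m ×ˢ cylinder y' m ⊆ W := by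
  obtain ⟨⟨x', y'⟩, ⟨hx', hy'⟩, hW⟩ := hWd.inter_open_nonempty _
    ((isOpen_cylinder E x ℓ).prod (isOpen_cylinder E y ℓ))
    ⟨(x, y), self_mem_cylinder x ℓ, self_mem_cylinder y ℓ⟩
  obtain ⟨A, hA, B, hB, hAB⟩ := mem_nhds_prod_iff.1 (hWo.mem_nhds hW)
  obtain ⟨m, hm, hxA, hyB⟩ := ((eventually_gt_atTop ℓ).and
    ((eventually_cylinder_subset hA).and (eventually_cylinder_subset hB))).exists
  exact ⟨x', hx', y', hy', m, hm, (prod_mono hxA hyB).trans hAB⟩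

theorem exists_refine_cylinders_prod_subset {W : Set ((∀ n, E n) × (∀ n, E n))} (hWo : IsOpen W)
    (hWd : Dense W) {S : Type*} (p : S → ∀ n, E n) (ℓ : ℕ) (P : Finset (S × S)) :
    ∃ q : S → ∀ n, E n, (∀ s, q s ∈ cylinder (p s) ℓ) ∧ ∃ m > ℓ,
      ∀ st ∈ P, st.1 ≠ st.2 → cylinder (q st.1) m ×ˢ cylinder (q st.2) m ⊆ W := by
  classical
  induction P using Finset.induction_on with
  | empty => exact ⟨p, fun s => self_mem_cylinder _ _, ℓ + 1, by omega, by simp⟩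
  | insert st P _ ih =>
    obtain ⟨q, hq, m, hℓm, hP⟩ := ih
    by_cases hst : st.1 = st.2
    · exact ⟨q, hq, m, hℓm, by simpa [hst] using hP⟩
    obtain ⟨x, hx, y, hy, m', hmm', hxy⟩ := exists_cylinder_prod_subset hWo hWd (q st.1) (q st.2) m
    set q' := update (update q st.1 x) st.2 y
    have hq' : ∀ s, q' s ∈ cylinder (q s) m := by
      intro s
      by_cases h2 : s = st.2
      · subst h2; simpa [q'] using hy
      by_cases h1 : s = st.1
      · subst h1; simpa [q', h2] using hx
      simp [q', h1, h2]
    have hsub : ∀ s, cylinder (q' s) m' ⊆ cylinder (q s) m :=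
      fun s => cylinder_subset_cylinder (hq' s) hmm'.le
    refine ⟨q', fun s => cylinder_subset_cylinder (hq s) hℓm.le (hq' s), m', hℓm.trans hmm', ?_⟩
    rintro uv huv huv'
    rcases Finset.mem_insert.1 huv with rfl | huv
    · simpa [q', update_apply, hst] using hxy
    · exact (prod_mono (hsub _) (hsub _)).trans (hP uv huv huv')

end PiNat

theorem isOpen_biInter_lt {X : Type*} [TopologicalSpace X] {W : ℕ → Set X}
    (hWo : ∀ i, IsOpen (W i)) (n : ℕ) : IsOpen (⋂ i < n, W i) :=
  (finite_lt_nat n).isOpen_biInter fun i _ => hWo i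

theorem dense_biInter_lt {X : Type*} [TopologicalSpace X] {W : ℕ → Set X}
    (hWo : ∀ i, IsOpen (W i)) (hWd : ∀ i, Dense (W i)) (n : ℕ) : Dense (⋂ i < n, W i) := by
  induction n with
  | zero => simp
  | succ n ih => rw [biInter_lt_succ]; exact ih.inter_of_isOpen_right (hWd n) (hWo n)

namespace Mycielski

structure CylinderLevel (E : ℕ → Type*) (n : ℕ) where
  center : (Fin n → Bool) → ∀ k, E k
  len : ℕ

def CylinderLevel.cyl {E : ℕ → Type*} {n : ℕ} (L : CylinderLevel E n) (s : Fin n → Bool) :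
    Set (∀ k, E k) :=
  cylinder (L.center s) L.len

variable {E : ℕ → Type*} [∀ n, TopologicalSpace (E n)] [∀ n, DiscreteTopology (E n)]
  {W : ℕ → Set ((∀ n, E n) × (∀ n, E n))}

theorem CylinderLevel.exists_succ {V : Set ((∀ n, E n) × (∀ n, E n))} (hVo : IsOpen V)
    (hVd : Dense V) {n : ℕ} (L : CylinderLevel E n) :
    ∃ L' : CylinderLevel E (n + 1), (∀ s, L'.center s ∈ L.cyl (Fin.init s)) ∧ L.len < L'.len ∧
      ∀ s t, s ≠ t → L'.cyl s ×ˢ L'.cyl t ⊆ V := by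
  obtain ⟨q, hq, m, hm, hqm⟩ :=
    exists_refine_cylinders_prod_subset hVo hVd
      (fun s : Fin (n + 1) → Bool => L.center (Fin.init s)) L.len .univ
  exact ⟨⟨q, m⟩, hq, hm, fun s t hst => hqm (s, t) (Finset.mem_univ _) hst⟩

variable [∀ n, Nonempty (E n)]

noncomputable def cylinderTree (hWo : ∀ i, IsOpen (W i)) (hWd : ∀ i, Dense (W i)) :
    (n : ℕ) → CylinderLevel E n
  | 0 => ⟨fun _ => Classical.arbitrary _, 0⟩
  | n + 1 => ((cylinderTree hWo hWd n).exists_succ (isOpen_biInter_lt hWo (n + 1))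
      (dense_biInter_lt hWo hWd (n + 1))).choose

section
variable (hWo : ∀ i, IsOpen (W i)) (hWd : ∀ i, Dense (W i))

theorem cylinderTree_center_succ_mem (n : ℕ) (s : Fin (n + 1) → Bool) :
    (cylinderTree hWo hWd (n + 1)).center s ∈ (cylinderTree hWo hWd n).cyl (Fin.init s) :=
  ((cylinderTree hWo hWd n).exists_succ (isOpen_biInter_lt hWo (n + 1))
    (dense_biInter_lt hWo hWd (n + 1))).choose_spec.1 s

theorem strictMono_cylinderTree_len : StrictMono fun n => (cylinderTree hWo hWd n).len :=
  strictMono_nat_of_lt_succ fun n => ((cylinderTree hWo hWd n).exists_succ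
    (isOpen_biInter_lt hWo (n + 1)) (dense_biInter_lt hWo hWd (n + 1))).choose_spec.2.1

theorem cylinderTree_cyl_prod_subset (n : ℕ) {s t : Fin (n + 1) → Bool} (hst : s ≠ t) :
    (cylinderTree hWo hWd (n + 1)).cyl s ×ˢ (cylinderTree hWo hWd (n + 1)).cyl t ⊆
      ⋂ i < n + 1, W i :=
  ((cylinderTree hWo hWd n).exists_succ (isOpen_biInter_lt hWo (n + 1))
    (dense_biInter_lt hWo hWd (n + 1))).choose_spec.2.2 s t hst

end

theorem exists_continuous_forall_ne_mem (hWo : ∀ i, IsOpen (W i)) (hWd : ∀ i, Dense (W i)) :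
    ∃ f : (ℕ → Bool) → ∀ k, E k, Continuous f ∧ ∀ x y, x ≠ y → ∀ i, (f x, f y) ∈ W i := by
  set T := cylinderTree hWo hWd
  set f : (ℕ → Bool) → ∀ k, E k := fun x k => (T (k + 1)).center (x ∘ Fin.val) k
  have hf : ∀ x n, f x ∈ (T n).cyl (x ∘ Fin.val) := fun x =>
    diag_mem_cylinder (strictMono_cylinderTree_len hWo hWd)
      fun n => cylinderTree_center_succ_mem hWo hWd n (x ∘ Fin.val)
  refine ⟨f, continuous_pi fun k => ?_, fun x y hxy i => ?_⟩
  · exact (continuous_of_discreteTopology (f := fun s => (T (k + 1)).center s k)).comp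
      (continuous_pi fun j : Fin (k + 1) => continuous_apply (j : ℕ))
  · obtain ⟨k, hk⟩ := Function.ne_iff.1 hxy
    have hne : (x ∘ Fin.val : Fin (max k i + 1) → Bool) ≠ y ∘ Fin.val :=
      fun h => hk (congrFun h ⟨k, by omega⟩)
    exact mem_iInter₂.1 (cylinderTree_cyl_prod_subset hWo hWd _ hne ⟨hf x _, hf y _⟩) i (by omega)

end Mycielski

theorem perfect_set_avoiding_meager_pairs_general
    (C : ℕ → Set ((ℕ → Bool) × (ℕ → Bool)))
    (hC_nwd : ∀ i : ℕ, IsNowhereDense (C i)) :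
    ∃ P : Set (ℕ → Bool), P.Nonempty ∧ Perfect P ∧
      ∀ x ∈ P, ∀ y ∈ P, x ≠ y → ∀ i : ℕ, (x, y) ∉ C i := by
  obtain ⟨f, hf, hfW⟩ := Mycielski.exists_continuous_forall_ne_mem
    (W := fun i => (closure (C i))ᶜ ∩ (diagonal (ℕ → Bool))ᶜ)
    (fun i => isClosed_closure.isOpen_compl.inter isClosed_diagonal.isOpen_compl)
    (fun i => (interior_eq_empty_iff_dense_compl.1 (hC_nwd i)).inter_of_isOpen_left
      dense_compl_diagonal isClosed_closure.isOpen_compl)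
  have hf_inj : Injective f := fun x y hxy => not_not.1 fun hne => (hfW x y hne 0).2 hxy
  refine ⟨range f, range_nonempty f, hf.perfect_range hf_inj, ?_⟩
  rintro _ ⟨x, rfl⟩ _ ⟨y, rfl⟩ hne i hC
  exact (hfW x y (ne_of_apply_ne f hne) i).1 (subset_closure hC)

/-- Mycielski-style construction: given countably many closed nowhere dense
subsets of the square of Cantor space, there is a nonempty perfect set `P` in
Cantor space such that no pair of distinct elements of `P` lies in any of
them. -/
theorem perfect_set_avoiding_meager_pairs
    (C : ℕ → Set ((ℕ → Bool) × (ℕ → Bool)))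
    (hC_closed : ∀ i : ℕ, IsClosed (C i))
    (hC_nwd : ∀ i : ℕ, IsNowhereDense (C i)) :
    ∃ P : Set (ℕ → Bool), P.Nonempty ∧ Perfect P ∧
      ∀ x ∈ P, ∀ y ∈ P, x ≠ y → ∀ i : ℕ, (x, y) ∉ C i :=
  perfect_set_avoiding_meager_pairs_general C hC_nwd
end

section
/- Let U ⊆ (ℕ → Bool) × (ℕ → Bool) be an open set that is symmetric, i.e., (x, y) ∈ U if and only if (y, x) ∈ U. Then there exists a nonempty perfect closed set P ⊆ (ℕ → Bool) such that either (x, y) ∈ U for all x, y ∈ P with x ≠ y, or (x, y) ∉ U for all x, y ∈ P with x ≠ y. -/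
open Set Function Filter Topology TopologicalSpace CantorScheme PiNat
open scoped ENNReal

/-!
Either some nonempty open set `C` is such that every nonempty open `V ⊆ C` contains two distinct
`U`-related points, or every nonempty open set contains a nonempty open `V` with no `U`-edges.
In the first case, openness of `U` lets us split any such `V` into two small disjoint open sets
whose product lies in `U`; iterating gives a Cantor scheme whose induced map is a continuous
injection of Cantor space with all pairs of distinct values `U`-related, and its range is a
perfect `U`-clique. In the second case, two distinct points of such a `V` have disjoint open
neighbourhoods inside `V` whose product avoids `U`, so the same construction applied to
the interior of `Uᶜ` gives a perfect set with no `U`-edges.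
-/

instance perfectSpace_nat_pi {E : Type*} [TopologicalSpace E] [Nontrivial E] :
    PerfectSpace (ℕ → E) := by
  refine ⟨preperfect_iff_nhds.2 fun x _ V hV => ?_⟩
  choose e he using fun n => exists_ne (x n)
  have hlim : Tendsto (fun n => update x n (e n)) atTop (𝓝 x) := by
    refine tendsto_pi_nhds.2 fun i => tendsto_nhds_of_eventually_eq ?_
    filter_upwards [eventually_gt_atTop i] with n hn
    exact update_of_ne hn.ne _ _
  obtain ⟨n, hn⟩ := (hlim.eventually_mem hV).exists
  exact ⟨_, ⟨hn, mem_univ _⟩, fun h => he n (by simpa using congrFun h n)⟩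

theorem perfect_range_of_continuous_injective {X Y : Type*} [TopologicalSpace X] [CompactSpace X]
    [PerfectSpace X] [TopologicalSpace Y] [T2Space Y] {f : X → Y} (hf : Continuous f)
    (hinj : Injective f) : Perfect (range f) := by
  refine ⟨(isCompact_range hf).isClosed, preperfect_iff_nhds.2 ?_⟩
  rintro _ ⟨a, rfl⟩ V hV
  obtain ⟨b, hbV, hba⟩ := preperfect_iff_nhds.1 PerfectSpace.univ_preperfect a (mem_univ a) _
    (hf.continuousAt hV)
  exact ⟨f b, ⟨hbV.1, mem_range_self b⟩, hinj.ne hba⟩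

instance SetRel.isSymm_interior_compl {X : Type*} [TopologicalSpace X] (U : SetRel X X)
    [U.IsSymm] : SetRel.IsSymm (interior Uᶜ : SetRel X X) := by
  refine SetRel.inv_eq_self_iff.1 ?_
  rw [SetRel.inv, ← Homeomorph.coe_prodComm, Homeomorph.preimage_interior, preimage_compl,
    Homeomorph.coe_prodComm]
  exact congrArg (interior ·ᶜ) U.inv_eq_self

def IsDenseOffDiagOn {X : Type*} [TopologicalSpace X] (W : SetRel X X) (C : Set X) : Prop :=
  ∀ V, IsOpen V → V ⊆ C → V.Nonempty → ∃ x ∈ V, ∃ y ∈ V, x ≠ y ∧ (x, y) ∈ W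

theorem isDenseOffDiagOn_interior_compl {X : Type*} [TopologicalSpace X] [T2Space X]
    [PerfectSpace X] {U : SetRel X X}
    (hU : ∀ C, IsOpen C → C.Nonempty → ¬IsDenseOffDiagOn U C) :
    IsDenseOffDiagOn (interior Uᶜ) univ := by
  intro V hV _ hVne
  obtain ⟨V', hV', hV'V, ⟨x, hx⟩, hV'U⟩ : ∃ V', IsOpen V' ∧ V' ⊆ V ∧ V'.Nonempty ∧
      ∀ x ∈ V', ∀ y ∈ V', x ≠ y → (x, y) ∉ U := by
    simpa [IsDenseOffDiagOn] using hU V hV hVne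
  obtain ⟨y, hy, hyx⟩ := preperfect_iff_nhds.1 hV'.preperfect x hx V' (hV'.mem_nhds hx)
  obtain ⟨u, v, hu, hv, hxu, hyv, huv⟩ := t2_separation hyx.symm
  refine ⟨x, hV'V hx, y, hV'V hy.1, hyx.symm, mem_interior.2 ⟨(V' ∩ u) ×ˢ (V' ∩ v), ?_,
    (hV'.inter hu).prod (hV'.inter hv), ⟨hx, hxu⟩, ⟨hy.1, hyv⟩⟩⟩
  rintro ⟨p, q⟩ ⟨⟨hp, hpu⟩, hq, hqv⟩
  exact hV'U p hp q hq (huv.ne_of_mem hpu hqv)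

theorem exists_isOpen_mem_closure_subset_ediam_le {X : Type*} [PseudoEMetricSpace X] {x : X}
    {s : Set X} (hs : s ∈ 𝓝 x) {ε : ℝ≥0∞} (hε : 0 < ε) :
    ∃ O, IsOpen O ∧ x ∈ O ∧ closure O ⊆ s ∧ Metric.ediam O ≤ ε := by
  obtain ⟨δ, hδ, hδs⟩ := Metric.nhds_basis_closedEBall.mem_iff.1 hs
  have hr : 0 < min δ (ε / 2) := lt_min hδ (ENNReal.half_pos hε.ne')
  refine ⟨Metric.eball x (min δ (ε / 2)), Metric.isOpen_eball, Metric.mem_eball_self hr, ?_, ?_⟩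
  · exact (closure_minimal Metric.eball_subset_closedEBall Metric.isClosed_closedEBall).trans
      ((Metric.closedEBall_subset_closedEBall (min_le_left _ _)).trans hδs)
  · calc Metric.ediam (Metric.eball x (min δ (ε / 2)))
      _ ≤ 2 * min δ (ε / 2) := Metric.ediam_eball_le
      _ ≤ 2 * (ε / 2) := by gcongr; exact min_le_right _ _
      _ = ε := ENNReal.mul_div_cancel two_ne_zero ENNReal.ofNat_ne_top

theorem IsDenseOffDiagOn.exists_split {X : Type*} [EMetricSpace X] {W : SetRel X X}
    {C V : Set X} (hW : IsDenseOffDiagOn W C) (hW_open : IsOpen W) (hV : IsOpen V)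
    (hVC : V ⊆ C) (hVne : V.Nonempty) {ε : ℝ≥0∞} (hε : 0 < ε) :
    ∃ V' : Bool → Set X,
      (∀ b, IsOpen (V' b) ∧ (V' b).Nonempty ∧ closure (V' b) ⊆ V ∧ Metric.ediam (V' b) ≤ ε) ∧
      Disjoint (V' false) (V' true) ∧ V' false ×ˢ V' true ⊆ W := by
  obtain ⟨x, hx, y, hy, hxy, hxyW⟩ := hW V hV hVC hVne
  obtain ⟨s, hs, t, ht, hstW⟩ := mem_nhds_prod_iff.1 (hW_open.mem_nhds hxyW)
  obtain ⟨u, v, hu, hv, hxu, hyv, huv⟩ := t2_separation hxy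
  obtain ⟨O₀, hO₀, hxO₀, hO₀sub, hO₀diam⟩ := exists_isOpen_mem_closure_subset_ediam_le
    (inter_mem (inter_mem hs (hu.mem_nhds hxu)) (hV.mem_nhds hx)) hε
  obtain ⟨O₁, hO₁, hyO₁, hO₁sub, hO₁diam⟩ := exists_isOpen_mem_closure_subset_ediam_le
    (inter_mem (inter_mem ht (hv.mem_nhds hyv)) (hV.mem_nhds hy)) hε
  have hO₀' := subset_closure.trans hO₀sub
  have hO₁' := subset_closure.trans hO₁sub
  refine ⟨fun b => cond b O₁ O₀, ?_, ?_, ?_⟩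
  · rintro (_ | _)
    · exact ⟨hO₀, ⟨x, hxO₀⟩, hO₀sub.trans inter_subset_right, hO₀diam⟩
    · exact ⟨hO₁, ⟨y, hyO₁⟩, hO₁sub.trans inter_subset_right, hO₁diam⟩
  · exact huv.mono (fun p hp => (hO₀' hp).1.2) (fun p hp => (hO₁' hp).1.2)
  · exact (prod_mono (fun p hp => (hO₀' hp).1.1) (fun p hp => (hO₁' hp).1.1)).trans hstW

theorem IsDenseOffDiagOn.exists_cantorScheme {X : Type*} [MetricSpace X] {W : SetRel X X}
    {C : Set X} (hW : IsDenseOffDiagOn W C) (hW_open : IsOpen W) (hC : IsOpen C)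
    (hCne : C.Nonempty) :
    ∃ D : List Bool → Set X, (∀ l, (D l).Nonempty) ∧ ClosureAntitone D ∧ VanishingDiam D ∧
      CantorScheme.Disjoint D ∧ ∀ l, D (false :: l) ×ˢ D (true :: l) ⊆ W := by
  let Good := {V : Set X // IsOpen V ∧ V ⊆ C ∧ V.Nonempty}
  choose V' hV' hdisj hprod using fun (G : Good) (n : ℕ) =>
    hW.exists_split hW_open G.2.1 G.2.2.1 G.2.2.2
      (ENNReal.inv_pos.2 (ENNReal.natCast_ne_top (n + 1)))
  let child (G : Good) (n : ℕ) (b : Bool) : Good :=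
    ⟨V' G n b, (hV' G n b).1, subset_closure.trans ((hV' G n b).2.2.1.trans G.2.2.1),
      (hV' G n b).2.1⟩
  let DG : List Bool → Good := fun l =>
    l.rec ⟨C, hC, subset_rfl, hCne⟩ fun b l G => child G l.length b
  -- `(0 : ℝ≥0∞)⁻¹ = ⊤`, so the root `C` is unconstrained.
  have hdiam : ∀ l, Metric.ediam (DG l).1 ≤ (l.length : ℝ≥0∞)⁻¹ := by
    rintro (_ | ⟨b, l⟩)
    · simp
    · exact (hV' (DG l) l.length b).2.2.2
  refine ⟨fun l => (DG l).1, fun l => (DG l).2.2.2, fun l b => (hV' (DG l) l.length b).2.2.1,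
    fun x => ?_, ?_, fun l => hprod (DG l) l.length⟩
  · refine tendsto_of_tendsto_of_tendsto_of_le_of_le tendsto_const_nhds
      ENNReal.tendsto_inv_nat_nhds_zero (fun _ => zero_le) fun n => ?_
    simpa using hdiam (res x n)
  · rintro l (_ | _) (_ | _) hbc
    · exact absurd rfl hbc
    · exact hdisj (DG l) l.length
    · exact (hdisj (DG l) l.length).symm
    · exact absurd rfl hbc

theorem IsDenseOffDiagOn.exists_continuous_injective {X : Type*} [TopologicalSpace X]
    [IsCompletelyMetrizableSpace X] {W : SetRel X X} [SetRel.IsSymm W] {C : Set X}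
    (hW : IsDenseOffDiagOn W C) (hW_open : IsOpen W) (hC : IsOpen C) (hCne : C.Nonempty) :
    ∃ f : (ℕ → Bool) → X, Continuous f ∧ Injective f ∧ Pairwise fun a b => (f a, f b) ∈ W := by
  let := upgradeIsCompletelyMetrizable X
  obtain ⟨D, hne, hanti, hdiam, hdisj, hDW⟩ := hW.exists_cantorScheme hW_open hC hCne
  have hdom : ∀ x, x ∈ (inducedMap D).1 := by
    simp [hanti.map_of_vanishingDiam hdiam hne]
  let f := fun x => (inducedMap D).2 ⟨x, hdom x⟩
  refine ⟨f, hdiam.map_continuous.comp (by fun_prop), fun a b hab => ?_, fun a b hab => ?_⟩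
  · simpa only [← Subtype.val_inj] using hdisj.map_injective hab
  obtain ⟨n, hres, hn⟩ : ∃ n, res a n = res b n ∧ a n ≠ b n :=
    ⟨firstDiff a b, res_eq_res.2 fun m hm => apply_eq_of_lt_firstDiff hm, apply_firstDiff_ne hab⟩
  have ha : f a ∈ D (a n :: res a n) := map_mem ⟨a, hdom a⟩ (n + 1)
  have hb : f b ∈ D (b n :: res a n) := hres ▸ map_mem ⟨b, hdom b⟩ (n + 1)
  generalize a n = p at ha hn
  generalize b n = q at hb hn
  cases p <;> cases q
  · exact absurd rfl hn
  · exact hDW _ ⟨ha, hb⟩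
  · exact SetRel.prod_subset_comm.1 (hDW _) ⟨ha, hb⟩
  · exact absurd rfl hn

theorem IsDenseOffDiagOn.exists_perfect_homogeneous {X : Type*} [TopologicalSpace X]
    [IsCompletelyMetrizableSpace X] {W : SetRel X X} [SetRel.IsSymm W]
    {C : Set X} (hW : IsDenseOffDiagOn W C) (hW_open : IsOpen W) (hC : IsOpen C)
    (hCne : C.Nonempty) :
    ∃ P : Set X, P.Nonempty ∧ Perfect P ∧ ∀ x ∈ P, ∀ y ∈ P, x ≠ y → (x, y) ∈ W := by
  obtain ⟨f, hf, hinj, hfW⟩ := hW.exists_continuous_injective hW_open hC hCne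
  refine ⟨range f, range_nonempty f, perfect_range_of_continuous_injective hf hinj, ?_⟩
  rintro _ ⟨a, rfl⟩ _ ⟨b, rfl⟩ hab
  exact hfW (ne_of_apply_ne f hab)

/-- The open-coloring case of Galvin's partition theorem: a symmetric open
subset of the square of Cantor space admits a nonempty perfect homogeneous
set. -/
theorem galvin_open_coloring
    (U : Set ((ℕ → Bool) × (ℕ → Bool)))
    (hU_open : IsOpen U)
    (hU_symm : ∀ x y : ℕ → Bool, (x, y) ∈ U ↔ (y, x) ∈ U) :
    ∃ P : Set (ℕ → Bool), P.Nonempty ∧ Perfect P ∧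
      ((∀ x ∈ P, ∀ y ∈ P, x ≠ y → (x, y) ∈ U) ∨
       (∀ x ∈ P, ∀ y ∈ P, x ≠ y → (x, y) ∉ U)) := by
  have : SetRel.IsSymm U := ⟨fun x y => (hU_symm x y).1⟩
  by_cases hdense : ∃ C, IsOpen C ∧ C.Nonempty ∧ IsDenseOffDiagOn U C
  · obtain ⟨C, hC, hCne, hUC⟩ := hdense
    obtain ⟨P, hP, hPperf, hPU⟩ := hUC.exists_perfect_homogeneous hU_open hC hCne
    exact ⟨P, hP, hPperf, Or.inl hPU⟩
  · push Not at hdense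
    obtain ⟨P, hP, hPperf, hPU⟩ :=
      (isDenseOffDiagOn_interior_compl hdense).exists_perfect_homogeneous isOpen_interior
        isOpen_univ univ_nonempty
    exact ⟨P, hP, hPperf, Or.inr fun x hx y hy hxy => interior_subset (hPU x hx y hy hxy)⟩
end
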